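/- Let Δ be the cycle graph on six vertices g₁, w₃, g₂, w₁, g₃, w₂ listed in cyclic order, so that for each i ∈ ℤ/3ℤ the vertex wᵢ is adjacent exactly to g_{i+1} and g_{i+2} (indices mod 3) and no two g-vertices and no two w-vertices are adjacent. Let q be a walk in Δ from g₁ to g₂ whose vertex set contains g₃. Then there exist a permutation π of {1,2,3} and a subwalk q′ of q such that q′ starts at g_{π(1)}, ends at g_{π(2)}, the vertex set of q′ contains g_{π(3)}, and the vertex set of q′ does not contain w_{π(3)}. -/
import Mathlib

open SimpleGraph

/-- The 6-cycle with vertices `g₁, w₃, g₂, w₁, g₃, w₂` in cyclic order,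
realised as `ZMod 6` with `x` adjacent to `x ± 1`. -/
def hexagon : SimpleGraph (ZMod 6) := SimpleGraph.fromRel (fun x y => y = x + 1)

/-- The three `g`-vertices: `g₁ = 0`, `g₂ = 2`, `g₃ = 4`. -/
def gVert : Fin 3 → ZMod 6 := ![0, 2, 4]

/-- The three `w`-vertices: `w₁ = 3`, `w₂ = 5`, `w₃ = 1`, so that `wᵢ` is adjacent
exactly to `g_{i+1}` and `g_{i+2}` (indices mod 3). -/
def wVert : Fin 3 → ZMod 6 := ![3, 5, 1]

lemma hex_aux (q : ℕ → ZMod 6) (n m : ℕ) (x y z w : ZMod 6) (π : Equiv.Perm (Fin 3))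
    (hgy : gVert (π 0) = y) (hgz : gVert (π 1) = z) (hgx : gVert (π 2) = x)
    (hwv : wVert (π 2) = w)
    (hzg : z ∈ ({0,2,4} : Finset (ZMod 6))) (hyg : y ∈ ({0,2,4} : Finset (ZMod 6)))
    (hwodd : w ∉ ({0,2,4} : Finset (ZMod 6)))
    (hwnbr : ∀ v : ZMod 6, v = w + 1 ∨ v = w - 1 → v = y ∨ v = z)
    (hxy : x ≠ y) (hyz : y ≠ z)
    (hstep : ∀ i, i < n → q (i+1) = q i + 1 ∨ q (i+1) = q i - 1)
    (heven : ∀ j, j ≤ n → j % 2 = 0 → q j ∈ ({0,2,4} : Finset (ZMod 6)))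
    (hodd : ∀ j, j ≤ n → j % 2 = 1 → q j ∉ ({0,2,4} : Finset (ZMod 6)))
    (hmn : m ≤ n) (hqm : q m = z) (hfirst : ∀ j, j < m → q j ≠ z)
    (hqx : q (m - 2) = x)
    (hcy : ∃ c, c < m ∧ q c = y) :
    ∃ (π : Equiv.Perm (Fin 3)) (a b : ℕ), a ≤ b ∧ b ≤ n ∧
      q a = gVert (π 0) ∧ q b = gVert (π 1) ∧
      (∃ j : ℕ, a ≤ j ∧ j ≤ b ∧ q j = gVert (π 2)) ∧
      ∀ j : ℕ, a ≤ j → j ≤ b → q j ≠ wVert (π 2) := by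
  classical
  have hm2 : m % 2 = 0 := by
    rcases Nat.mod_two_eq_zero_or_one m with h | h
    · exact h
    · exact absurd (by rw [hqm]; exact hzg) (hodd m hmn h)
  obtain ⟨c0, hc0m, hc0y⟩ := hcy
  have hm1 : 1 ≤ m := by omega
  set c := Nat.findGreatest (fun k => q k = y) (m - 1) with hcdef
  have hcy' : q c = y := Nat.findGreatest_spec (P := fun k => q k = y) (show c0 ≤ m - 1 by omega) hc0y
  have hclast : ∀ k, c < k → k ≤ m - 1 → q k ≠ y :=
    fun k h1 h2 => Nat.findGreatest_is_greatest h1 h2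
  have hcle : c ≤ m - 1 := Nat.findGreatest_le _
  have hc2 : c % 2 = 0 := by
    rcases Nat.mod_two_eq_zero_or_one c with h | h
    · exact h
    · exact absurd (by rw [hcy']; exact hyg) (hodd c (by omega) h)
  have hcne : c ≠ m - 2 := by
    intro h
    exact hxy (by rw [← hqx, ← h, hcy'])
  have hclt : c ≤ m - 2 := by omega
  have havoid : ∀ j, c ≤ j → j ≤ m → q j ≠ w := by
    intro j hcj hjm hqj
    have hjn : j ≤ n := le_trans hjm hmn
    have hj2 : j % 2 = 1 := by
      rcases Nat.mod_two_eq_zero_or_one j with h | h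
      · exact absurd (heven j hjn h) (by rw [hqj]; exact hwodd)
      · exact h
    have hjc : c < j := by omega
    have hjm' : j < m := by omega
    have hjn' : j < n := by omega
    have h1 : q (j+1) = y ∨ q (j+1) = z := by
      apply hwnbr
      rcases hstep j hjn' with h | h
      · left; rw [h, hqj]
      · right; rw [h, hqj]
    rcases h1 with h1 | h1
    · have hne : j + 1 ≠ m := by
        intro h; rw [h, hqm] at h1; exact hyz h1.symm
      exact hclast (j+1) (by omega) (by omega) h1
    · have hjm1 : j + 1 = m := by
        by_contra h
        exact hfirst (j+1) (by omega) h1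
      have h2 : q (j-1) = y ∨ q (j-1) = z := by
        apply hwnbr
        have hs := hstep (j-1) (by omega)
        have he : j - 1 + 1 = j := by omega
        rw [he] at hs
        rcases hs with h | h
        · right; rw [← hqj, h]; ring
        · left; rw [← hqj, h]; ring
      rcases h2 with h2 | h2
      · rcases eq_or_lt_of_le (show c ≤ j - 1 by omega) with h | h
        · exact hxy (by rw [← hqx, show m - 2 = c by omega, hcy'])
        · exact hclast (j-1) h (by omega) h2
      · exact hfirst (j-1) (by omega) h2
  refine ⟨π, c, m, by omega, hmn, ?_, ?_, ⟨m - 2, hclt, by omega, ?_⟩, ?_⟩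
  · rw [hgy]; exact hcy'
  · rw [hgz]; exact hqm
  · rw [hgx]; exact hqx
  · intro j h1 h2; rw [hwv]; exact havoid j h1 h2

/-- Every walk in the hexagon from `g₁` to `g₂` through `g₃` has a subwalk from
`g_{π(1)}` to `g_{π(2)}` through `g_{π(3)}` avoiding `w_{π(3)}`, for some
permutation `π` of `{1,2,3}` (here rendered as a permutation of `Fin 3`). -/
theorem statement_11 (q : ℕ → ZMod 6) (n : ℕ)
    (hadj : ∀ i : ℕ, i < n → hexagon.Adj (q i) (q (i + 1)))
    (h0 : q 0 = gVert 0) (hn : q n = gVert 1)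
    (hg3 : ∃ i : ℕ, i ≤ n ∧ q i = gVert 2) :
    ∃ (π : Equiv.Perm (Fin 3)) (a b : ℕ), a ≤ b ∧ b ≤ n ∧
      q a = gVert (π 0) ∧ q b = gVert (π 1) ∧
      (∃ j : ℕ, a ≤ j ∧ j ≤ b ∧ q j = gVert (π 2)) ∧
      ∀ j : ℕ, a ≤ j → j ≤ b → q j ≠ wVert (π 2) := by
  classical
  have h0' : q 0 = 0 := by rw [h0]; decide
  have hn' : q n = 2 := by rw [hn]; decide
  have hstep : ∀ i, i < n → q (i+1) = q i + 1 ∨ q (i+1) = q i - 1 := by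
    intro i hi
    have h := hadj i hi
    rw [hexagon, SimpleGraph.fromRel_adj] at h
    rcases h.2 with h | h
    · left; exact h
    · right; rw [h]; ring
  have hinv : ∀ j, j ≤ n → q j - (j : ZMod 6) ∈ ({0,2,4} : Finset (ZMod 6)) := by
    intro j
    induction j with
    | zero => intro _; simp [h0']
    | succ k ih =>
      intro hk
      have ihk := ih (by omega)
      have hcast : ((k+1 : ℕ) : ZMod 6) = (k : ZMod 6) + 1 := by push_cast; ring
      have cl : ∀ d : ZMod 6, d ∈ ({0,2,4} : Finset (ZMod 6)) →
          d + 4 ∈ ({0,2,4} : Finset (ZMod 6)) := by decide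
      rcases hstep k (by omega) with h | h
      · rw [h, hcast, show q k + 1 - ((k:ZMod 6) + 1) = q k - (k:ZMod 6) from by ring]
        exact ihk
      · rw [h, hcast, show q k - 1 - ((k:ZMod 6) + 1)
            = q k - (k:ZMod 6) + (-2) from by ring,
          show (-2 : ZMod 6) = 4 from by decide]
        exact cl _ ihk
  have heven : ∀ j, j ≤ n → j % 2 = 0 → q j ∈ ({0,2,4} : Finset (ZMod 6)) := by
    intro j hj h2
    obtain ⟨k, hk⟩ : ∃ k, j = 2 * k := ⟨j/2, by omega⟩
    subst hk
    have this1 := hinv (2*k) hj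
    have fact : ∀ (v d : ZMod 6), d ∈ ({0,2,4} : Finset (ZMod 6)) →
        2*v + d ∈ ({0,2,4} : Finset (ZMod 6)) := by decide
    have hq : q (2*k) = ((2*k : ℕ) : ZMod 6) + (q (2*k) - ((2*k:ℕ) : ZMod 6)) := by ring
    rw [hq]
    push_cast
    push_cast at this1
    exact fact _ _ this1
  have hodd : ∀ j, j ≤ n → j % 2 = 1 → q j ∉ ({0,2,4} : Finset (ZMod 6)) := by
    intro j hj h2
    obtain ⟨k, hk⟩ : ∃ k, j = 2 * k + 1 := ⟨j/2, by omega⟩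
    subst hk
    have this1 := hinv (2*k+1) hj
    have fact : ∀ (v d : ZMod 6), d ∈ ({0,2,4} : Finset (ZMod 6)) →
        2*v + 1 + d ∉ ({0,2,4} : Finset (ZMod 6)) := by decide
    have hq : q (2*k+1) = ((2*k+1 : ℕ) : ZMod 6) + (q (2*k+1) - ((2*k+1:ℕ) : ZMod 6)) := by
      ring
    rw [hq]
    push_cast
    push_cast at this1
    exact fact _ _ this1
  obtain ⟨i4, hi4n, hi4⟩ := hg3
  have hi4' : q i4 = 4 := by rw [hi4]; decide
  have e2 : ∃ i, i ≤ n ∧ q i = 2 := ⟨n, le_refl n, hn'⟩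
  have e4 : ∃ i, i ≤ n ∧ q i = 4 := ⟨i4, hi4n, hi4'⟩
  set t2 := Nat.find e2 with ht2def
  set t4 := Nat.find e4 with ht4def
  obtain ⟨ht2n, hqt2⟩ := Nat.find_spec e2
  obtain ⟨ht4n, hqt4⟩ := Nat.find_spec e4
  rw [← ht2def] at ht2n hqt2
  rw [← ht4def] at ht4n hqt4
  have hfirst2 : ∀ j, j < t2 → q j ≠ 2 := by
    intro j hj hqj
    exact Nat.find_min e2 hj ⟨by omega, hqj⟩
  have hfirst4 : ∀ j, j < t4 → q j ≠ 4 := by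
    intro j hj hqj
    exact Nat.find_min e4 hj ⟨by omega, hqj⟩
  have hne : t2 ≠ t4 := by
    intro h
    rw [h] at hqt2
    exact absurd (hqt4.symm.trans hqt2) (by decide)
  rcases Nat.lt_or_ge t2 t4 with hlt | hge
  · -- z = 4, m = t4
    have ht4pos : 0 < t4 := by
      rcases Nat.eq_zero_or_pos t4 with h | h
      · rw [h] at hqt4; rw [h0'] at hqt4; exact absurd hqt4 (by decide)
      · exact h
    have ht4e : t4 % 2 = 0 := by
      rcases Nat.mod_two_eq_zero_or_one t4 with h | h
      · exact h
      · exact absurd (by rw [hqt4]; decide) (hodd t4 ht4n h)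
    have ht42 : 2 ≤ t4 := by omega
    have hx : q (t4 - 2) ∈ ({0,2,4} : Finset (ZMod 6)) :=
      heven (t4-2) (by omega) (by omega)
    have hxne : q (t4 - 2) ≠ 4 := hfirst4 (t4-2) (by omega)
    simp only [Finset.mem_insert, Finset.mem_singleton] at hx
    rcases hx with hx | hx | hx
    · -- x = 0, y = 2, w = 3, π = (0↦1,1↦2,2↦0)
      exact hex_aux q n t4 0 2 4 3
        ⟨![1,2,0], ![2,0,1], by decide, by decide⟩
        (by decide) (by decide) (by decide) (by decide)
        (by decide) (by decide) (by decide) (by decide)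
        (by decide) (by decide)
        hstep heven hodd ht4n hqt4 hfirst4 hx ⟨t2, hlt, hqt2⟩
    · -- x = 2, y = 0, w = 5, π = (0↦0,1↦2,2↦1)
      exact hex_aux q n t4 2 0 4 5
        ⟨![0,2,1], ![0,2,1], by decide, by decide⟩
        (by decide) (by decide) (by decide) (by decide)
        (by decide) (by decide) (by decide) (by decide)
        (by decide) (by decide)
        hstep heven hodd ht4n hqt4 hfirst4 hx ⟨0, ht4pos, h0'⟩
    · exact absurd hx hxne
  · -- z = 2, m = t2
    have hlt : t4 < t2 := by omega
    have ht2pos : 0 < t2 := by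
      rcases Nat.eq_zero_or_pos t2 with h | h
      · rw [h] at hqt2; rw [h0'] at hqt2; exact absurd hqt2 (by decide)
      · exact h
    have ht2e : t2 % 2 = 0 := by
      rcases Nat.mod_two_eq_zero_or_one t2 with h | h
      · exact h
      · exact absurd (by rw [hqt2]; decide) (hodd t2 ht2n h)
    have ht22 : 2 ≤ t2 := by omega
    have hx : q (t2 - 2) ∈ ({0,2,4} : Finset (ZMod 6)) :=
      heven (t2-2) (by omega) (by omega)
    have hxne : q (t2 - 2) ≠ 2 := hfirst2 (t2-2) (by omega)
    simp only [Finset.mem_insert, Finset.mem_singleton] at hx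
    rcases hx with hx | hx | hx
    · -- x = 0, y = 4, w = 3, π = (0↦2,1↦1,2↦0)
      exact hex_aux q n t2 0 4 2 3
        ⟨![2,1,0], ![2,1,0], by decide, by decide⟩
        (by decide) (by decide) (by decide) (by decide)
        (by decide) (by decide) (by decide) (by decide)
        (by decide) (by decide)
        hstep heven hodd ht2n hqt2 hfirst2 hx ⟨t4, hlt, hqt4⟩
    · exact absurd hx hxne
    · -- x = 4, y = 0, w = 1, π = id
      exact hex_aux q n t2 4 0 2 1
        ⟨![0,1,2], ![0,1,2], by decide, by decide⟩
        (by decide) (by decide) (by decide) (by decide)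
        (by decide) (by decide) (by decide) (by decide)
        (by decide) (by decide)
        hstep heven hodd ht2n hqt2 hfirst2 hx ⟨0, ht2pos, h0'⟩
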